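/- Let X = Y = [0,1] with Lebesgue measure μ = ν = λ, and let c(x,y) = 1 − √(x−y) for y ≤ x and c(x,y) = ∞ for y > x. Then the pushforward π of λ under x ↦ (x,x) (Lebesgue measure on the diagonal) is the unique transport plan in Π(λ,λ) with finite cost, but π is not strongly c-monotone: there exist no Borel functions φ, ψ : [0,1] → [-∞,∞) with φ(x) + ψ(y) ≤ c(x,y) everywhere and φ(x) + ψ(x) = 1 for λ-a.e. x. -/

import Mathlib

open MeasureTheory Set
open scoped ENNReal

noncomputable section

def IsCoupling {X Y : Type*} [MeasurableSpace X] [MeasurableSpace Y]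
    (μ : Measure X) (ν : Measure Y) (π : Measure (X × Y)) : Prop :=
  π.map Prod.fst = μ ∧ π.map Prod.snd = ν

def CMonotoneSet {X Y : Type*} (c : X × Y → ℝ≥0∞) (Γ : Set (X × Y)) : Prop :=
  ∀ (n : ℕ) (f : Fin (n + 1) → X × Y), (∀ i, f i ∈ Γ) →
    ∑ i, c (f i) ≤ ∑ i, c ((f i).1, (f (i + 1)).2)

noncomputable def exCost (p : ℝ × ℝ) : ℝ≥0∞ :=
  if p.2 ≤ p.1 then ENNReal.ofReal (1 - Real.sqrt (p.1 - p.2)) else ⊤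

/-!
Finite cost forces a coupling `π'` to live on `{y ≤ x}`; as both marginals are `λ`,
`∫ (x - y) dπ' = 0`, so `π'` sits on the diagonal.

For potentials with `φ + ψ = 1` on a conull set `Δ`, the constraint at `(x', x)` gives
`φ x - φ x' ≥ √(x' - x)` for `x < x'` in `Δ`. Splitting `[x, x']` at a point of `Δ` in its middle
third turns a bound `C √(x' - x)` into `(2 / √3) C √(x' - x)`, so `φ x - φ x'` would be infinite.
-/

lemma measurable_exCost : Measurable exCost :=
  Measurable.ite (measurableSet_le measurable_snd measurable_fst) (by fun_prop) measurable_const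

@[simp]
lemma exCost_self (x : ℝ) : exCost (x, x) = 1 := by
  simp [exCost]

lemma exCost_eq_top_of_lt {x y : ℝ} (h : x < y) : exCost (x, y) = ⊤ :=
  if_neg (not_le.mpr h)

lemma exCost_toEReal_of_le {x y : ℝ} (hyx : y ≤ x) (hxy : x - y ≤ 1) :
    (exCost (x, y) : EReal) = ((1 - √(x - y) : ℝ) : EReal) := by
  have : √(x - y) ≤ 1 := Real.sqrt_le_one.mpr hxy
  rw [exCost, if_pos hyx, EReal.coe_ennreal_ofReal, max_eq_left (by linarith)]

lemma isCoupling_map_diag {X : Type*} [MeasurableSpace X] (μ : Measure X) :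
    IsCoupling μ μ (μ.map fun x => (x, x)) := by
  have hdiag : Measurable fun x : X => (x, x) := by fun_prop
  constructor
  · rw [Measure.map_map measurable_fst hdiag]; exact Measure.map_id
  · rw [Measure.map_map measurable_snd hdiag]; exact Measure.map_id

lemma eq_map_diag_of_ae_snd_eq_fst {X : Type*} [MeasurableSpace X] {μ : Measure X}
    {π : Measure (X × X)} (hfst : π.map Prod.fst = μ) (hdiag : ∀ᵐ p ∂π, p.2 = p.1) :
    π = μ.map fun x => (x, x) := by
  have hmeas : Measurable fun x : X => (x, x) := by fun_prop
  have hπ : π.map (fun p => (p.1, p.1)) = π := by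
    rw [Measure.map_congr (g := id) (hdiag.mono fun p hp => by simp [Prod.ext_iff, hp]),
      Measure.map_id]
  rw [← hfst, Measure.map_map hmeas measurable_fst]
  exact hπ.symm

lemma ae_snd_eq_fst_of_map_fst_eq_map_snd {π : Measure (ℝ × ℝ)}
    (hmarg : π.map Prod.fst = π.map Prod.snd) (hint : Integrable id (π.map Prod.fst))
    (hle : ∀ᵐ p ∂π, p.2 ≤ p.1) : ∀ᵐ p ∂π, p.2 = p.1 := by
  have hfst : Integrable Prod.fst π :=
    (integrable_map_measure aestronglyMeasurable_id measurable_fst.aemeasurable).mp hint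
  have hsnd : Integrable Prod.snd π :=
    (integrable_map_measure aestronglyMeasurable_id measurable_snd.aemeasurable).mp (hmarg ▸ hint)
  have hzero : ∫ p, (p.1 - p.2) ∂π = 0 := by
    rw [integral_sub hfst hsnd,
      ← integral_map (f := fun x => x) measurable_fst.aemeasurable aestronglyMeasurable_id,
      ← integral_map (f := fun x => x) measurable_snd.aemeasurable aestronglyMeasurable_id, hmarg,
      sub_self]
  have hnonneg : 0 ≤ᵐ[π] fun p => p.1 - p.2 := hle.mono fun p hp => sub_nonneg.mpr hp
  filter_upwards [(integral_eq_zero_iff_of_nonneg_ae hnonneg (hfst.sub hsnd)).mp hzero] with p hp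
  exact (sub_eq_zero.mp hp).symm

lemma ae_snd_le_fst_of_lintegral_exCost_ne_top {π : Measure (ℝ × ℝ)}
    (h : ∫⁻ p, exCost p ∂π ≠ ⊤) : ∀ᵐ p ∂π, p.2 ≤ p.1 := by
  filter_upwards [ae_lt_top measurable_exCost h] with p hp
  by_contra hlt
  exact hp.ne (exCost_eq_top_of_lt (not_le.mp hlt))

lemma EReal.sub_le_toReal_sub_of_add {a b a' : EReal} {u v : ℝ} (ha : a ≠ ⊤) (hb : b ≠ ⊤)
    (ha' : a' ≠ ⊤) (ha'_bot : a' ≠ ⊥) (hab : a + b = u) (ha'b : a' + b ≤ v) :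
    u - v ≤ a.toReal - a'.toReal := by
  have ha_bot : a ≠ ⊥ := by rintro rfl; simp at hab
  have hb_bot : b ≠ ⊥ := by rintro rfl; simp at hab
  lift a to ℝ using ⟨ha, ha_bot⟩
  lift b to ℝ using ⟨hb, hb_bot⟩
  lift a' to ℝ using ⟨ha', ha'_bot⟩
  norm_cast at hab ha'b
  simp only [EReal.toReal_coe]
  linarith

lemma nonempty_inter_of_ae_restrict {α : Type*} [MeasurableSpace α] {μ : Measure α}
    {s t Δ : Set α} (h : ∀ᵐ x ∂μ.restrict s, x ∈ Δ) (hts : t ⊆ s) (ht : μ t ≠ 0) :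
    (t ∩ Δ).Nonempty := by
  by_contra hempty
  have htΔ : t ⊆ {x | x ∉ Δ} := fun x hx hxΔ => hempty ⟨x, hx, hxΔ⟩
  exact ht (Measure.restrict_eq_self μ hts ▸ measure_mono_null htΔ (ae_iff.mp h))

section SqrtDecay

variable {f : ℝ → ℝ} {Δ : Set ℝ}

lemma sqrt_decay_improve {C : ℝ} (hC : 0 ≤ C)
    (hmid : ∀ x ∈ Δ, ∀ x' ∈ Δ, x < x' → ∃ m ∈ Δ, x + (x' - x) / 3 ≤ m ∧ m ≤ x' - (x' - x) / 3)
    (hdecay : ∀ x ∈ Δ, ∀ x' ∈ Δ, x < x' → C * √(x' - x) ≤ f x - f x') :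
    ∀ x ∈ Δ, ∀ x' ∈ Δ, x < x' → 2 / √3 * C * √(x' - x) ≤ f x - f x' := by
  intro x hx x' hx' hlt
  obtain ⟨m, hm, hxm, hmx'⟩ := hmid x hx x' hx' hlt
  have hthird : √(x' - x) / √3 = √((x' - x) / 3) := (Real.sqrt_div' _ (by norm_num)).symm
  have hleft : C * √((x' - x) / 3) ≤ f x - f m :=
    (mul_le_mul_of_nonneg_left (Real.sqrt_le_sqrt (by linarith)) hC).trans
      (hdecay x hx m hm (by linarith [hlt]))
  have hright : C * √((x' - x) / 3) ≤ f m - f x' :=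
    (mul_le_mul_of_nonneg_left (Real.sqrt_le_sqrt (by linarith)) hC).trans
      (hdecay m hm x' hx' (by linarith [hlt]))
  calc 2 / √3 * C * √(x' - x) = 2 * (C * √((x' - x) / 3)) := by rw [← hthird]; ring
    _ ≤ f x - f x' := by linarith

lemma not_sqrt_decay_of_dense {u v : ℝ} (huv : u < v) (hΔ : Δ ⊆ Icc u v)
    (hdense : ∀ l r, l < r → Ioo l r ⊆ Icc u v → (Ioo l r ∩ Δ).Nonempty) :
    ¬ ∀ x ∈ Δ, ∀ x' ∈ Δ, x < x' → √(x' - x) ≤ f x - f x' := by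
  intro hdecay
  have hmid : ∀ x ∈ Δ, ∀ x' ∈ Δ, x < x' →
      ∃ m ∈ Δ, x + (x' - x) / 3 ≤ m ∧ m ≤ x' - (x' - x) / 3 := by
    intro x hx x' hx' hlt
    have hsub : Icc (x + (x' - x) / 3) (x' - (x' - x) / 3) ⊆ Icc u v :=
      Icc_subset_Icc (by linarith [(hΔ hx).1]) (by linarith [(hΔ hx').2])
    obtain ⟨m, ⟨hxm, hmx'⟩, hm⟩ := hdense (x + (x' - x) / 3) (x' - (x' - x) / 3) (by linarith)
      (Ioo_subset_Icc_self.trans hsub)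
    exact ⟨m, hm, hxm.le, hmx'.le⟩
  have hr : 1 < 2 / √3 := by
    rw [one_lt_div (by positivity), Real.sqrt_lt' (by norm_num)]
    norm_num
  have hpow : ∀ k : ℕ, ∀ x ∈ Δ, ∀ x' ∈ Δ, x < x' → (2 / √3) ^ k * √(x' - x) ≤ f x - f x' := by
    intro k
    induction k with
    | zero => simpa using hdecay
    | succ k ih =>
      simpa only [pow_succ', mul_assoc] using sqrt_decay_improve (by positivity) hmid ih
  obtain ⟨a, ⟨-, ha⟩, haΔ⟩ := hdense u ((u + v) / 2) (by linarith)
    (Ioo_subset_Icc_self.trans (Icc_subset_Icc le_rfl (by linarith)))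
  obtain ⟨b, ⟨hb, -⟩, hbΔ⟩ := hdense ((u + v) / 2) v (by linarith)
    (Ioo_subset_Icc_self.trans (Icc_subset_Icc (by linarith) le_rfl))
  have hab : 0 < √(b - a) := Real.sqrt_pos.mpr (by linarith)
  obtain ⟨k, hk⟩ := pow_unbounded_of_one_lt ((f a - f b) / √(b - a)) hr
  rw [div_lt_iff₀ hab] at hk
  linarith [hpow k a haΔ b hbΔ (by linarith)]

end SqrtDecay

lemma sqrt_sub_le_toReal_sub_of_potentials {φ ψ : ℝ → EReal} (hφ : ∀ x, φ x ≠ ⊤)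
    (hψ : ∀ y, ψ y ≠ ⊤)
    (hle : ∀ x ∈ Icc (0 : ℝ) 1, ∀ y ∈ Icc (0 : ℝ) 1, φ x + ψ y ≤ (exCost (x, y)).toEReal)
    {x x' : ℝ} (hx : x ∈ Icc (0 : ℝ) 1) (hx' : x' ∈ Icc (0 : ℝ) 1)
    (hxe : φ x + ψ x = 1) (hx'e : φ x' + ψ x' = 1) (hlt : x < x') :
    √(x' - x) ≤ (φ x).toReal - (φ x').toReal := by
  have hφx'_bot : φ x' ≠ ⊥ := by
    intro h
    rw [h, EReal.bot_add] at hx'e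
    exact (EReal.bot_lt_coe 1).ne hx'e
  have hcost := hle x' hx' x hx
  rw [exCost_toEReal_of_le hlt.le (by linarith [hx.1, hx'.2])] at hcost
  have := EReal.sub_le_toReal_sub_of_add (hφ x) (hψ x) (hφ x') hφx'_bot
    (hxe.trans EReal.coe_one.symm) hcost
  linarith

theorem optimal_not_stronglyCMonotone_example :
    let μ : Measure ℝ := volume.restrict (Icc (0 : ℝ) 1)
    let π : Measure (ℝ × ℝ) := μ.map (fun x => (x, x))
    IsCoupling μ μ π ∧ (∫⁻ p, exCost p ∂π ≠ ⊤) ∧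
    (∀ π' : Measure (ℝ × ℝ), IsCoupling μ μ π' → ∫⁻ p, exCost p ∂π' ≠ ⊤ → π' = π) ∧
    ¬ ∃ (φ ψ : ℝ → EReal), Measurable φ ∧ Measurable ψ ∧
        (∀ x, φ x ≠ ⊤) ∧ (∀ y, ψ y ≠ ⊤) ∧
        (∀ x ∈ Icc (0 : ℝ) 1, ∀ y ∈ Icc (0 : ℝ) 1,
          φ x + ψ y ≤ (exCost (x, y)).toEReal) ∧
        (∀ᵐ x ∂μ, φ x + ψ x = (1 : EReal)) := by
  intro μ π
  refine ⟨isCoupling_map_diag μ, ?_, ?_, ?_⟩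
  · rw [lintegral_map measurable_exCost (by fun_prop)]
    simp [μ]
  · rintro π' ⟨hfst, hsnd⟩ hfin
    refine eq_map_diag_of_ae_snd_eq_fst hfst (ae_snd_eq_fst_of_map_fst_eq_map_snd
      (hfst.trans hsnd.symm) ?_ (ae_snd_le_fst_of_lintegral_exCost_ne_top hfin))
    exact hfst ▸ continuous_id.integrableOn_Icc
  · rintro ⟨φ, ψ, -, -, hφ, hψ, hle, hae⟩
    let Δ := {x ∈ Icc (0 : ℝ) 1 | φ x + ψ x = 1}
    have hdense : ∀ l r, l < r → Ioo l r ⊆ Icc 0 1 → (Ioo l r ∩ Δ).Nonempty :=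
      fun l r hlr hsub => nonempty_inter_of_ae_restrict
        (hae.and (ae_restrict_mem measurableSet_Icc) |>.mono fun x hx => ⟨hx.2, hx.1⟩) hsub
        (by simpa using hlr)
    exact not_sqrt_decay_of_dense zero_lt_one (fun x hx => hx.1) hdense fun x hx x' hx' hlt =>
      sqrt_sub_le_toReal_sub_of_potentials hφ hψ hle hx.1 hx'.1 hx.2 hx'.2 hlt
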